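/- arXiv:2411.07388 — 7 statements merged into one kernel-verified Lean document; each statement's English description precedes it below -/
import Mathlib

section
/- Let ξ¹,…,ξᴾ ∈ {0,1}ⁿ satisfy 𝟙ᵀξᵘ = pn for all μ and (ξᵘ)ᵀξᵛ = p²n for all μ ≠ ν, with p ∈ (0,1). Let φ: ℝ → ℝ be any function, fix I₀ < I₁, set x₀ = φ(I₀), x₁ = φ(I₁) with x₀ ≠ x₁, and define α = (I₁−I₀)/(x₁−x₀), γ = (pI₁+(1−p)I₀)/(px₁+(1−p)x₀) (assuming the denominator is nonzero). Define W = (α/(p(1−p)n)) Σ_μ (ξᵘ − p𝟙)(ξᵘ − p𝟙)ᵀ + (γ/n)𝟙𝟙ᵀ. Then for each ν, W((x₁−x₀)ξᵛ + x₀𝟙) = (I₁−I₀)ξᛊ + I₀𝟙 where ξᛊ = ξᵛ, i.e., W ξ̄ᵛ = (I₁−I₀)ξᵛ + I₀𝟙. -/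
open Matrix Finset

/-- Equilibria assignment identity: `W ξ̄ᵛ = (I₁−I₀)ξᵛ + I₀𝟙`. -/
theorem equilibria_assignment_identity
    (n P : ℕ) (hn : 0 < n) (p : ℝ) (hp0 : 0 < p) (hp1 : p < 1)
    (ξ : Fin P → Fin n → ℝ)
    (hbin : ∀ μ i, ξ μ i = 0 ∨ ξ μ i = 1)
    (hsparse : ∀ μ, ∑ i, ξ μ i = p * n)
    (hcorr : ∀ μ ν, μ ≠ ν → ∑ i, ξ μ i * ξ ν i = p ^ 2 * n)
    (φ : ℝ → ℝ) (I₀ I₁ : ℝ) (hI : I₀ < I₁)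
    (x₀ x₁ : ℝ) (hx₀ : x₀ = φ I₀) (hx₁ : x₁ = φ I₁) (hx : x₀ ≠ x₁)
    (hden : p * x₁ + (1 - p) * x₀ ≠ 0)
    (α γ : ℝ)
    (hα : α = (I₁ - I₀) / (x₁ - x₀))
    (hγ : γ = (p * I₁ + (1 - p) * I₀) / (p * x₁ + (1 - p) * x₀))
    (W : Matrix (Fin n) (Fin n) ℝ)
    (hW : W = fun i j =>
      α / (p * (1 - p) * n) * ∑ μ, (ξ μ i - p) * (ξ μ j - p) + γ / n) :
    ∀ ν, W *ᵥ (fun i => (x₁ - x₀) * ξ ν i + x₀) =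
      fun i => (I₁ - I₀) * ξ ν i + I₀ := by
  intro ν
  funext i
  have hn' : (n : ℝ) ≠ 0 := Nat.cast_ne_zero.mpr hn.ne'
  have hxne : x₁ - x₀ ≠ 0 := sub_ne_zero.mpr (Ne.symm hx)
  have hp' : p ≠ 0 := hp0.ne'
  have hp1' : (1 : ℝ) - p ≠ 0 := sub_ne_zero.mpr (ne_of_gt hp1)
  have hsq : ∀ μ j, ξ μ j * ξ μ j = ξ μ j := by
    intro μ j; rcases hbin μ j with h | h <;> simp [h]
  have hself : ∑ j, ξ ν j * ξ ν j = p * n := by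
    simp only [hsq]; exact hsparse ν
  set v : Fin n → ℝ := fun j => (x₁ - x₀) * ξ ν j + x₀ with hv
  have expand : ∀ μ, ∑ j, (ξ μ j - p) * v j
      = (x₁ - x₀) * ((∑ j, ξ μ j * ξ ν j) - p ^ 2 * n) := by
    intro μ
    have hterm : ∀ j, (ξ μ j - p) * v j
        = (x₁ - x₀) * (ξ μ j * ξ ν j) + x₀ * ξ μ j - (p * (x₁ - x₀)) * ξ ν j - p * x₀ := by
      intro j; simp only [hv]; ring
    simp only [hterm, Finset.sum_sub_distrib, Finset.sum_add_distrib, ← Finset.mul_sum,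
      Finset.sum_const, Finset.card_univ, Fintype.card_fin, nsmul_eq_mul]
    rw [hsparse μ, hsparse ν]
    ring
  have key : ∀ μ, (ξ μ i - p) * (∑ j, (ξ μ j - p) * v j)
      = if μ = ν then (ξ ν i - p) * ((x₁ - x₀) * (p * (1 - p) * n)) else 0 := by
    intro μ
    by_cases h : μ = ν
    · subst h
      rw [expand μ, hself, if_pos rfl]
      ring
    · rw [expand μ, hcorr μ ν h, if_neg h]
      ring
  simp only [hW, Matrix.mulVec, dotProduct]
  have split : ∑ j, (α / (p * (1 - p) * n) * ∑ μ, (ξ μ i - p) * (ξ μ j - p) + γ / n) * v j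
      = α / (p * (1 - p) * n) * (∑ μ, (ξ μ i - p) * (∑ j, (ξ μ j - p) * v j))
        + γ / n * (∑ j, v j) := by
    have h2 : ∀ j, (α / (p * (1 - p) * ↑n) * ∑ μ, (ξ μ i - p) * (ξ μ j - p) + γ / ↑n) * v j
        = α / (p * (1 - p) * ↑n) * ∑ μ, (ξ μ i - p) * ((ξ μ j - p) * v j) + γ / ↑n * v j := by
      intro j
      rw [add_mul, mul_assoc, Finset.sum_mul]
      congr 2
      apply Finset.sum_congr rfl
      intros; ring
    simp only [h2, Finset.sum_add_distrib, ← Finset.mul_sum]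
    rw [Finset.sum_comm]
    congr 2
    apply Finset.sum_congr rfl
    intro μ _
    rw [Finset.mul_sum]
  rw [split]
  have hsumμ : ∑ μ, (ξ μ i - p) * (∑ j, (ξ μ j - p) * v j)
      = (ξ ν i - p) * ((x₁ - x₀) * (p * (1 - p) * n)) := by
    rw [Finset.sum_congr rfl (fun μ _ => key μ)]
    simp
  have hsumv : ∑ j, v j = (x₁ - x₀) * (p * n) + n * x₀ := by
    simp only [hv]
    rw [Finset.sum_add_distrib, ← Finset.mul_sum, hsparse ν]
    simp [mul_comm]
  rw [hsumμ, hsumv, hα, hγ]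
  have hden' : x₁ * p + x₀ * (1 - p) ≠ 0 := by convert hden using 1; ring
  field_simp
  ring
end

section
/- Under the assumptions of the equilibria assignment theorem with r = p (equal sparsity 𝟙ᵀξᵘ = pn, correlation (ξᵘ)ᵀξᵛ = p²n), let f(z) := φ(z) − γ⁻¹z with γ = (pI₁+(1−p)I₀)/(px₁+(1−p)x₀) ≠ 0. Then f(I₀)·f(I₁) = −p(1−p)(I₀x₁ − I₁x₀)²/(pI₁+(1−p)I₀)² ≤ 0, and hence if φ is continuous there exists z ∈ [I₀, I₁] with φ(z) = γ⁻¹z. -/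
/-- `f(I₀)f(I₁) = −p(1−p)(I₀x₁−I₁x₀)²/(pI₁+(1−p)I₀)² ≤ 0`, hence by continuity
there is a solution of `φ(z) = γ⁻¹z` in `[I₀, I₁]`. -/
theorem homogeneous_equilibrium_exists
    (φ : ℝ → ℝ) (I₀ I₁ : ℝ) (hI : I₀ < I₁)
    (x₀ x₁ : ℝ) (hx₀ : x₀ = φ I₀) (hx₁ : x₁ = φ I₁)
    (p : ℝ) (hp0 : 0 < p) (hp1 : p < 1)
    (hden : p * x₁ + (1 - p) * x₀ ≠ 0)
    (hnum : p * I₁ + (1 - p) * I₀ ≠ 0)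
    (γ : ℝ) (hγ : γ = (p * I₁ + (1 - p) * I₀) / (p * x₁ + (1 - p) * x₀))
    (hγ0 : γ ≠ 0) :
    (φ I₀ - γ⁻¹ * I₀) * (φ I₁ - γ⁻¹ * I₁) =
        -(p * (1 - p) * (I₀ * x₁ - I₁ * x₀) ^ 2 / (p * I₁ + (1 - p) * I₀) ^ 2) ∧
      (φ I₀ - γ⁻¹ * I₀) * (φ I₁ - γ⁻¹ * I₁) ≤ 0 ∧
      (Continuous φ → ∃ z ∈ Set.Icc I₀ I₁, φ z = γ⁻¹ * z) := by
  have hginv : γ⁻¹ = (p * x₁ + (1 - p) * x₀) / (p * I₁ + (1 - p) * I₀) := by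
    rw [hγ, inv_div]
  have key : (φ I₀ - γ⁻¹ * I₀) * (φ I₁ - γ⁻¹ * I₁) =
      -(p * (1 - p) * (I₀ * x₁ - I₁ * x₀) ^ 2 / (p * I₁ + (1 - p) * I₀) ^ 2) := by
    rw [← hx₀, ← hx₁, hginv]
    field_simp
    ring
  have hle : (φ I₀ - γ⁻¹ * I₀) * (φ I₁ - γ⁻¹ * I₁) ≤ 0 := by
    rw [key]
    have h1 : 0 ≤ p * (1 - p) * (I₀ * x₁ - I₁ * x₀) ^ 2 / (p * I₁ + (1 - p) * I₀) ^ 2 := by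
      have h2 : 0 < 1 - p := by linarith
      positivity
    linarith
  refine ⟨key, hle, fun hc => ?_⟩
  have hgc : Continuous (fun z => φ z - γ⁻¹ * z) := by continuity
  rcases mul_nonpos_iff.mp hle with ⟨h0, h1⟩ | ⟨h0, h1⟩
  · obtain ⟨z, hz, hz0⟩ := intermediate_value_Icc' hI.le hgc.continuousOn
      (show (0:ℝ) ∈ Set.Icc (φ I₁ - γ⁻¹ * I₁) (φ I₀ - γ⁻¹ * I₀) from ⟨h1, h0⟩)
    exact ⟨z, hz, by linarith [hz0]⟩
  · obtain ⟨z, hz, hz0⟩ := intermediate_value_Icc hI.le hgc.continuousOn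
      (show (0:ℝ) ∈ Set.Icc (φ I₀ - γ⁻¹ * I₀) (φ I₁ - γ⁻¹ * I₁) from ⟨h0, h1⟩)
    exact ⟨z, hz, by linarith [hz0]⟩
end

section
/- Under the setting of the equilibria assignment theorem with r = p, p ∈ (0,1), the anti-memory ξ̄ᵃⁿᵗ := (x₁−x₀)(𝟙 − ξ) + x₀𝟙 of a prototypical memory ξ is an equilibrium point of the firing rate model for every memory if and only if p = 1/2 or I₀x₁ = I₁x₀, equivalently if and only if (1−2p)(I₀x₁ − I₁x₀) = 0 (assuming φ is injective on {I₀, I₁} in the sense that φ(z) = x₁ only if z = I₁ and φ(z) = x₀ only if z = I₀ among the relevant values). -/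
open Matrix Finset

/-- Anti-memories are equilibria of the firing rate model (for every memory)
if and only if `p = 1/2` or `I₀x₁ = I₁x₀`, equivalently
`(1−2p)(I₀x₁ − I₁x₀) = 0`. -/
theorem antimemories_equilibria_iff
    (n P : ℕ) (hn : 0 < n) (hP : 0 < P) (p : ℝ) (hp0 : 0 < p) (hp1 : p < 1)
    (ξ : Fin P → Fin n → ℝ)
    (hbin : ∀ μ i, ξ μ i = 0 ∨ ξ μ i = 1)
    (hsparse : ∀ μ, ∑ i, ξ μ i = p * n)
    (hcorr : ∀ μ ν, μ ≠ ν → ∑ i, ξ μ i * ξ ν i = p ^ 2 * n)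
    (φ : ℝ → ℝ) (I₀ I₁ : ℝ) (hI : I₀ < I₁)
    (x₀ x₁ : ℝ) (hx₀ : x₀ = φ I₀) (hx₁ : x₁ = φ I₁) (hx : x₀ < x₁)
    (hden : p * x₁ + (1 - p) * x₀ ≠ 0)
    (hφ₁ : ∀ z, φ z = x₁ → z = I₁) (hφ₀ : ∀ z, φ z = x₀ → z = I₀)
    (α γ : ℝ)
    (hα : α = (I₁ - I₀) / (x₁ - x₀))
    (hγ : γ = (p * I₁ + (1 - p) * I₀) / (p * x₁ + (1 - p) * x₀))
    (W : Matrix (Fin n) (Fin n) ℝ)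
    (hW : W = fun i j =>
      α / (p * (1 - p) * n) * ∑ μ, (ξ μ i - p) * (ξ μ j - p) + γ / n) :
    (∀ ν, (fun i => φ ((W *ᵥ (fun j => (x₁ - x₀) * (1 - ξ ν j) + x₀)) i)) =
        fun i => (x₁ - x₀) * (1 - ξ ν i) + x₀) ↔
      (p = 1 / 2 ∨ I₀ * x₁ = I₁ * x₀) := by
  have hn' : (n : ℝ) ≠ 0 := Nat.cast_ne_zero.mpr hn.ne'
  have hp0' : p ≠ 0 := hp0.ne'
  have hp1' : (1 - p) ≠ 0 := sub_ne_zero.mpr hp1.ne'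
  have hxne : x₁ - x₀ ≠ 0 := sub_ne_zero.mpr hx.ne'
  have hpn : p * (1 - p) * (n : ℝ) ≠ 0 := mul_ne_zero (mul_ne_zero hp0' hp1') hn'
  have hsq : ∀ μ j, ξ μ j * ξ μ j = ξ μ j := by
    intro μ j; rcases hbin μ j with h | h <;> rw [h] <;> ring
  have hsum1 : ∀ μ, ∑ j, (ξ μ j - p) = 0 := by
    intro μ
    rw [Finset.sum_sub_distrib, hsparse, Finset.sum_const, Finset.card_univ,
      Fintype.card_fin, nsmul_eq_mul]
    ring
  have hsum2 : ∀ μ ν, ∑ j, (ξ μ j - p) * ξ ν j =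
      if μ = ν then p * (1 - p) * n else 0 := by
    intro μ ν
    by_cases h : μ = ν
    · subst h
      rw [if_pos rfl]
      simp only [sub_mul]
      rw [Finset.sum_sub_distrib]
      have h1 : ∑ j, ξ μ j * ξ μ j = ∑ j, ξ μ j := Finset.sum_congr rfl (fun j _ => hsq μ j)
      rw [h1, hsparse, ← Finset.mul_sum, hsparse]
      ring
    · simp only [if_neg h, sub_mul]
      rw [Finset.sum_sub_distrib, hcorr μ ν h, ← Finset.mul_sum, hsparse]
      ring
  -- sums against the antimemory vector
  have hsumv : ∀ μ ν, ∑ j, (ξ μ j - p) * ((x₁ - x₀) * (1 - ξ ν j) + x₀) =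
      if μ = ν then -(x₁ - x₀) * (p * (1 - p) * n) else 0 := by
    intro μ ν
    have h1 : ∀ j : Fin n, (ξ μ j - p) * ((x₁ - x₀) * (1 - ξ ν j) + x₀) =
        (ξ μ j - p) * x₁ - (x₁ - x₀) * ((ξ μ j - p) * ξ ν j) := fun j => by ring
    rw [Finset.sum_congr rfl (fun j _ => h1 j), Finset.sum_sub_distrib,
      ← Finset.sum_mul, hsum1, ← Finset.mul_sum, hsum2]
    by_cases h : μ = ν
    · simp [h]; ring
    · simp [h]
  have hsumc : ∀ ν, ∑ j, ((x₁ - x₀) * (1 - ξ ν j) + x₀) = n * x₁ - (x₁ - x₀) * (p * n) := by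
    intro ν
    have h1 : ∀ j : Fin n, (x₁ - x₀) * (1 - ξ ν j) + x₀ = x₁ - (x₁ - x₀) * ξ ν j :=
      fun j => by ring
    rw [Finset.sum_congr rfl (fun j _ => h1 j), Finset.sum_sub_distrib,
      Finset.sum_const, Finset.card_univ, Fintype.card_fin, nsmul_eq_mul,
      ← Finset.mul_sum, hsparse]
  set D : ℝ := γ * (x₁ - p * (x₁ - x₀)) + (I₁ - I₀) * p with hD
  -- key computation of the local field
  have key : ∀ ν i,
      (W *ᵥ (fun j => (x₁ - x₀) * (1 - ξ ν j) + x₀)) i = D - (I₁ - I₀) * ξ ν i := by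
    intro ν i
    have hα' : α * (x₁ - x₀) = I₁ - I₀ := by
      rw [hα]; field_simp
    simp only [hW, mulVec, dotProduct]
    set v : Fin n → ℝ := fun j => (x₁ - x₀) * (1 - ξ ν j) + x₀ with hv
    have step : ∀ j : Fin n,
        (α / (p * (1 - p) * n) * ∑ μ, (ξ μ i - p) * (ξ μ j - p) + γ / n) * v j =
        α / (p * (1 - p) * n) * ∑ μ, (ξ μ i - p) * ((ξ μ j - p) * v j) + γ / n * v j := by
      intro j
      have : (∑ μ, (ξ μ i - p) * (ξ μ j - p)) * v j
          = ∑ μ, (ξ μ i - p) * ((ξ μ j - p) * v j) := by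
        rw [Finset.sum_mul]; exact Finset.sum_congr rfl (fun μ _ => by ring)
      rw [add_mul, mul_assoc, this]
    calc ∑ j, (α / (p * (1 - p) * n) * ∑ μ, (ξ μ i - p) * (ξ μ j - p) + γ / n) * v j
        = ∑ j, (α / (p * (1 - p) * n) * ∑ μ, (ξ μ i - p) * ((ξ μ j - p) * v j)
            + γ / n * v j) := Finset.sum_congr rfl (fun j _ => step j)
      _ = α / (p * (1 - p) * n) * ∑ μ, (ξ μ i - p) * ∑ j, ((ξ μ j - p) * v j)
            + γ / n * ∑ j, v j := by
          rw [Finset.sum_add_distrib, ← Finset.mul_sum, ← Finset.mul_sum, Finset.sum_comm]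
          congr 2
          exact Finset.sum_congr rfl (fun μ _ => (Finset.mul_sum _ _ _).symm)
      _ = α / (p * (1 - p) * n) * ((ξ ν i - p) * (-(x₁ - x₀) * (p * (1 - p) * n)))
            + γ / n * (n * x₁ - (x₁ - x₀) * (p * n)) := by
          rw [hsumc ν]
          congr 2
          have : ∀ μ : Fin P, (ξ μ i - p) * ∑ j, ((ξ μ j - p) * v j) =
              if μ = ν then (ξ ν i - p) * (-(x₁ - x₀) * (p * (1 - p) * n)) else 0 := by
            intro μ
            rw [hsumv μ ν]
            by_cases h : μ = ν <;> simp [h]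
          rw [Finset.sum_congr rfl (fun μ _ => this μ), Finset.sum_ite_eq' _ ν,
            if_pos (Finset.mem_univ ν)]
      _ = D - (I₁ - I₀) * ξ ν i := by
          rw [hD, ← hα', hα]
          field_simp
          ring
  -- equivalence D = I₁ ↔ condition
  have hcond : D = I₁ ↔ (p = 1 / 2 ∨ I₀ * x₁ = I₁ * x₀) := by
    have h1 : D - I₁ = γ * ((1 - p) * x₁ + p * x₀) - ((1 - p) * I₁ + p * I₀) := by
      rw [hD]; ring
    have h2 : γ * ((1 - p) * x₁ + p * x₀) - ((1 - p) * I₁ + p * I₀)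
        = (2 * p - 1) * (I₁ * x₀ - I₀ * x₁) / (p * x₁ + (1 - p) * x₀) := by
      rw [hγ]; field_simp; ring
    constructor
    · intro h
      have h0 : (2 * p - 1) * (I₁ * x₀ - I₀ * x₁) / (p * x₁ + (1 - p) * x₀) = 0 := by
        rw [← h2, ← h1, h, sub_self]
      have h0' : (2 * p - 1) * (I₁ * x₀ - I₀ * x₁) = 0 :=
        (div_eq_zero_iff.mp h0).resolve_right hden
      rcases mul_eq_zero.mp h0' with h' | h'
      · left; linarith
      · right; linarith
    · intro h
      have h0 : (2 * p - 1) * (I₁ * x₀ - I₀ * x₁) = 0 := by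
        rcases h with h | h
        · rw [h]; ring
        · rw [show I₁ * x₀ - I₀ * x₁ = 0 by linarith]; ring
      have : D - I₁ = 0 := by rw [h1, h2, h0]; simp
      linarith
  rw [← hcond]
  constructor
  · -- forward direction
    intro heq
    set ν : Fin P := ⟨0, hP⟩
    have hex : ∃ i, ξ ν i = 0 := by
      by_contra hc
      push_neg at hc
      have hall : ∀ i, ξ ν i = 1 := fun i => (hbin ν i).resolve_left (hc i)
      have hne : (n : ℝ) = p * n := by
        rw [← hsparse ν]; simp [hall]
      have hzero : (1 - p) * (n : ℝ) = 0 := by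
        linear_combination hne
      exact absurd hzero (mul_ne_zero hp1' hn')
    obtain ⟨i, hi⟩ := hex
    have h2 := congrFun (heq ν) i
    simp only [key ν i, hi] at h2
    have hD1 : φ D = x₁ := by
      rw [show D - (I₁ - I₀) * 0 = D by ring] at h2
      rw [h2]; ring
    exact hφ₁ D hD1
  · -- backward direction
    intro hDI ν
    funext i
    rw [key ν i]
    rcases hbin ν i with h | h
    · rw [h, show D - (I₁ - I₀) * 0 = D by ring, hDI, ← hx₁]; ring
    · rw [h, hDI, show I₁ - (I₁ - I₀) * 1 = I₀ by ring, ← hx₀]; ring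
end

section
/- Let ξ¹,…,ξᴾ, ξ ∈ {0,1}ⁿ be distinct vectors such that the augmented set {ξ, ξ¹,…,ξᴾ} satisfies 𝟙ᵀη = pn for every member η and ηᵀη' = p²n for every distinct pair. Let W be the covariance-based synaptic matrix built from ξ¹,…,ξᴾ only (with parameters α, γ as in the equilibria assignment theorem), and let ξ̄ = (x₁−x₀)ξ + x₀𝟙. Then W ξ̄ = (pI₁ + (1−p)I₀)𝟙. -/
open Matrix Finset

/-- A memory `ξ` equally sparse and equally correlated with the stored memories
but not used in the construction of `W` is mapped by `W` to a homogeneous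
vector: `W ξ̄ = (pI₁ + (1−p)I₀)𝟙`. -/
theorem unstored_memory_maps_to_homogeneous
    (n P : ℕ) (hn : 0 < n) (p : ℝ) (hp0 : 0 < p) (hp1 : p < 1)
    (ξmem : Fin P → Fin n → ℝ) (ξ : Fin n → ℝ)
    (hbin : ∀ μ i, ξmem μ i = 0 ∨ ξmem μ i = 1)
    (hbinξ : ∀ i, ξ i = 0 ∨ ξ i = 1)
    (hdist : ∀ μ, ξ ≠ ξmem μ)
    (hsparse : ∀ μ, ∑ i, ξmem μ i = p * n)
    (hsparseξ : ∑ i, ξ i = p * n)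
    (hcorr : ∀ μ ν, μ ≠ ν → ∑ i, ξmem μ i * ξmem ν i = p ^ 2 * n)
    (hcorrξ : ∀ μ, ∑ i, ξ i * ξmem μ i = p ^ 2 * n)
    (φ : ℝ → ℝ) (I₀ I₁ : ℝ) (hI : I₀ < I₁)
    (x₀ x₁ : ℝ) (hx₀ : x₀ = φ I₀) (hx₁ : x₁ = φ I₁) (hx : x₀ ≠ x₁)
    (hden : p * x₁ + (1 - p) * x₀ ≠ 0)
    (α γ : ℝ)
    (hα : α = (I₁ - I₀) / (x₁ - x₀))
    (hγ : γ = (p * I₁ + (1 - p) * I₀) / (p * x₁ + (1 - p) * x₀))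
    (W : Matrix (Fin n) (Fin n) ℝ)
    (hW : W = fun i j =>
      α / (p * (1 - p) * n) * ∑ μ, (ξmem μ i - p) * (ξmem μ j - p) + γ / n) :
    W *ᵥ (fun i => (x₁ - x₀) * ξ i + x₀) = fun _ => p * I₁ + (1 - p) * I₀ := by
  have hn' : (n : ℝ) ≠ 0 := Nat.cast_ne_zero.mpr hn.ne'
  have hconst : ∑ _j : Fin n, (p * x₀) = (n : ℝ) * (p * x₀) := by
    rw [Finset.sum_const, Finset.card_univ, Fintype.card_fin, nsmul_eq_mul]
  have key : ∀ μ, ∑ j, (ξmem μ j - p) * ((x₁ - x₀) * ξ j + x₀) = 0 := by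
    intro μ
    calc ∑ j, (ξmem μ j - p) * ((x₁ - x₀) * ξ j + x₀)
        = ∑ j, ((x₁ - x₀) * (ξ j * ξmem μ j) - p * (x₁ - x₀) * ξ j
            + x₀ * ξmem μ j - p * x₀) :=
          Finset.sum_congr rfl fun j _ => by ring
      _ = (x₁ - x₀) * ∑ j, ξ j * ξmem μ j - p * (x₁ - x₀) * ∑ j, ξ j
            + x₀ * ∑ j, ξmem μ j - (n : ℝ) * (p * x₀) := by
          rw [Finset.sum_sub_distrib, Finset.sum_add_distrib, Finset.sum_sub_distrib,
            ← Finset.mul_sum, ← Finset.mul_sum, ← Finset.mul_sum, hconst]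
      _ = 0 := by rw [hcorrξ μ, hsparseξ, hsparse μ]; ring
  funext i
  subst hW
  simp only [mulVec, dotProduct, add_mul, Finset.sum_add_distrib]
  have step : ∀ j, (α / (p * (1 - p) * n) * ∑ μ, (ξmem μ i - p) * (ξmem μ j - p))
      * ((x₁ - x₀) * ξ j + x₀)
      = α / (p * (1 - p) * n)
        * ∑ μ, (ξmem μ i - p) * ((ξmem μ j - p) * ((x₁ - x₀) * ξ j + x₀)) := by
    intro j
    rw [mul_assoc, Finset.sum_mul]
    congr 1
    exact Finset.sum_congr rfl fun μ _ => by ring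
  have hA : ∑ j, (α / (p * (1 - p) * n) * ∑ μ, (ξmem μ i - p) * (ξmem μ j - p))
      * ((x₁ - x₀) * ξ j + x₀) = 0 := by
    calc ∑ j, (α / (p * (1 - p) * n) * ∑ μ, (ξmem μ i - p) * (ξmem μ j - p))
          * ((x₁ - x₀) * ξ j + x₀)
        = ∑ j, α / (p * (1 - p) * n)
            * ∑ μ, (ξmem μ i - p) * ((ξmem μ j - p) * ((x₁ - x₀) * ξ j + x₀)) :=
          Finset.sum_congr rfl fun j _ => step j
      _ = α / (p * (1 - p) * n)
            * ∑ j, ∑ μ, (ξmem μ i - p) * ((ξmem μ j - p) * ((x₁ - x₀) * ξ j + x₀)) := by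
          rw [Finset.mul_sum]
      _ = 0 := by
          rw [Finset.sum_comm]
          rw [Finset.sum_eq_zero fun μ _ => by
            rw [← Finset.mul_sum, key μ, mul_zero]]
          rw [mul_zero]
  rw [hA, zero_add]
  have hsum : ∑ j, γ / n * ((x₁ - x₀) * ξ j + x₀)
      = γ / n * ((x₁ - x₀) * (p * n) + (n : ℝ) * x₀) := by
    rw [← Finset.mul_sum, Finset.sum_add_distrib, ← Finset.mul_sum, hsparseξ,
      Finset.sum_const, Finset.card_univ, Fintype.card_fin, nsmul_eq_mul]
  rw [hsum]
  have h5 : γ / n * ((x₁ - x₀) * (p * n) + (n : ℝ) * x₀)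
      = γ * (p * x₁ + (1 - p) * x₀) := by field_simp; ring
  rw [h5, hγ, div_mul_cancel₀ _ hden]
end

section
/- Let W ∈ ℝⁿˣⁿ be symmetric, let D be a diagonal matrix with nonnegative diagonal entries, and let η > 0 be such that every diagonal entry of D is at most η. If ηW ≺ Iₙ (i.e., Iₙ − ηW is positive definite), then every eigenvalue of the matrix J = −Iₙ + DW has strictly negative real part. -/
open Matrix

/-- If `W` is symmetric, `D` diagonal with entries in `[0, η]`, and
`ηW ≺ Iₙ`, then every eigenvalue of `J = −Iₙ + DW` has negative real part. -/
theorem jacobian_eigenvalues_negative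
    (n : ℕ) (W : Matrix (Fin n) (Fin n) ℝ) (hWsymm : W.IsSymm)
    (d : Fin n → ℝ) (hd0 : ∀ i, 0 ≤ d i)
    (η : ℝ) (hη : 0 < η) (hdη : ∀ i, d i ≤ η)
    (hpos : ((1 : Matrix (Fin n) (Fin n) ℝ) - η • W).PosDef)
    (J : Matrix (Fin n) (Fin n) ℝ)
    (hJ : J = -(1 : Matrix (Fin n) (Fin n) ℝ) + Matrix.diagonal d * W) :
    ∀ μ ∈ spectrum ℂ (J.map (Complex.ofReal)), μ.re < 0 := by
  intro μ hμ
  -- extract an eigenvector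
  rw [← AlgEquiv.spectrum_eq (Matrix.toLinAlgEquiv' : Matrix (Fin n) (Fin n) ℂ ≃ₐ[ℂ] _)] at hμ
  obtain ⟨v, hv⟩ := (Module.End.hasEigenvalue_iff_mem_spectrum.mpr hμ).exists_hasEigenvector
  have hvne : v ≠ 0 := hv.2
  have hme : (J.map (Complex.ofReal)).mulVec v = μ • v := by
    simpa [Matrix.toLinAlgEquiv'_apply, Matrix.toLin'_apply] using hv.apply_eq_smul
  set u : Fin n → ℂ := fun i => ∑ j, (W i j : ℂ) * v j with hu
  have hcomp : ∀ i, (d i : ℂ) * u i = (μ + 1) * v i := by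
    intro i
    have h := congrFun hme i
    simp only [Matrix.mulVec, dotProduct, Matrix.map_apply, hJ, Matrix.add_apply,
      Matrix.neg_apply, Matrix.one_apply, Matrix.diagonal_mul, Pi.smul_apply,
      smul_eq_mul, Complex.ofReal_add, Complex.ofReal_neg, Complex.ofReal_mul] at h
    have h2 : (∑ j, ((-(if i = j then (1:ℝ) else 0) : ℝ) : ℂ) * v j)
        + ∑ j, ((d i : ℂ) * (W i j : ℂ)) * v j = μ * v i := by
      rw [← Finset.sum_add_distrib]
      simpa [add_mul] using h
    have h3 : (∑ j, ((-(if i = j then (1:ℝ) else 0) : ℝ) : ℂ) * v j) = -v i := by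
      simp [apply_ite, Finset.sum_ite_eq]
    rw [h3] at h2
    have h4 : (∑ j, ((d i : ℂ) * (W i j : ℂ)) * v j) = (d i : ℂ) * u i := by
      simp only [hu, Finset.mul_sum, mul_assoc]
    rw [h4] at h2
    linear_combination h2
  by_cases hm1 : μ = -1
  · simp [hm1]
  -- ν = μ + 1 ≠ 0
  have hν : μ + 1 ≠ 0 := fun h => hm1 (by linear_combination h)
  have hv0 : ∀ i, d i = 0 → v i = 0 := by
    intro i hdi
    have := hcomp i
    rw [hdi] at this
    simpa [hν] using this.symm
  set a : Fin n → ℝ := fun i => (v i).re with ha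
  set b : Fin n → ℝ := fun i => (v i).im with hb
  set q : ℝ := ∑ i, Complex.normSq (v i) / d i with hq
  set N : ℝ := ∑ i, Complex.normSq (v i) with hN
  have hNpos : 0 < N := by
    have : ∃ i, v i ≠ 0 := by
      by_contra h; push_neg at h; exact hvne (funext h)
    obtain ⟨i, hi⟩ := this
    exact Finset.sum_pos' (fun j _ => Complex.normSq_nonneg _)
      ⟨i, Finset.mem_univ i, Complex.normSq_pos.mpr hi⟩
  have hqN : N / η ≤ q := by
    rw [hN, hq, Finset.sum_div]
    apply Finset.sum_le_sum
    intro i _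
    rcases eq_or_lt_of_le (hd0 i) with h0 | h0
    · simp [hv0 i h0.symm, ← h0]
    · exact div_le_div_of_nonneg_left (Complex.normSq_nonneg _) h0 (hdη i)
  have hqpos : 0 < q := lt_of_lt_of_le (by positivity) hqN
  -- key identity
  have hkey : (μ + 1) * (q : ℂ) = ∑ i, (starRingEnd ℂ) (v i) * u i := by
    rw [hq]
    push_cast
    rw [Finset.mul_sum]
    apply Finset.sum_congr rfl
    intro i _
    rcases eq_or_lt_of_le (hd0 i) with h0 | h0
    · simp [hv0 i h0.symm, ← h0]
    · have hc := hcomp i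
      have hdi : (d i : ℂ) ≠ 0 := by exact_mod_cast h0.ne'
      have hui : u i = (μ + 1) * v i / (d i : ℂ) := by
        field_simp; linear_combination hc
      rw [hui, Complex.normSq_eq_conj_mul_self]
      push_cast
      field_simp
  set r : ℂ := ∑ i, (starRingEnd ℂ) (v i) * u i with hr
  have hre_r : r.re = a ⬝ᵥ W.mulVec a + b ⬝ᵥ W.mulVec b := by
    rw [hr, Complex.re_sum]
    have : ∀ i, ((starRingEnd ℂ) (v i) * u i).re
        = ∑ j, (W i j * (a i * a j) + W i j * (b i * b j)) := by
      intro i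
      rw [hu, Finset.mul_sum, Complex.re_sum]
      apply Finset.sum_congr rfl
      intro j _
      simp [Complex.mul_re, Complex.mul_im, ha, hb]
      ring
    rw [Finset.sum_congr rfl (fun i _ => this i)]
    simp only [Finset.sum_add_distrib]
    congr 1
    · simp [dotProduct, mulVec, Finset.mul_sum]
      apply Finset.sum_congr rfl; intro i _
      apply Finset.sum_congr rfl; intro j _; ring
    · simp [dotProduct, mulVec, Finset.mul_sum]
      apply Finset.sum_congr rfl; intro i _
      apply Finset.sum_congr rfl; intro j _; ring
  -- positive definiteness bounds
  have hsemi : ∀ x : Fin n → ℝ, η * (x ⬝ᵥ W.mulVec x) ≤ x ⬝ᵥ x := by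
    intro x
    have h := hpos.posSemidef.dotProduct_mulVec_nonneg x
    simp only [sub_mulVec, one_mulVec, smul_mulVec, dotProduct_sub,
      dotProduct_smul, smul_eq_mul, star_trivial] at h
    linarith
  have hstrict : ∀ x : Fin n → ℝ, x ≠ 0 → η * (x ⬝ᵥ W.mulVec x) < x ⬝ᵥ x := by
    intro x hx
    have h := hpos.dotProduct_mulVec_pos hx
    simp only [sub_mulVec, one_mulVec, smul_mulVec, dotProduct_sub,
      dotProduct_smul, smul_eq_mul, star_trivial, RCLike.re_to_real] at h
    linarith
  have hab : a ≠ 0 ∨ b ≠ 0 := by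
    by_contra h
    push_neg at h
    apply hvne
    funext i
    have h1 := congrFun h.1 i
    have h2 := congrFun h.2 i
    simp only [ha, hb, Pi.zero_apply] at h1 h2
    exact Complex.ext h1 h2
  have hNab : N = a ⬝ᵥ a + b ⬝ᵥ b := by
    rw [hN, dotProduct, dotProduct, ← Finset.sum_add_distrib]
    exact Finset.sum_congr rfl fun i _ => by simp [Complex.normSq_apply, ha, hb]
  have hrN : η * r.re < N := by
    rw [hre_r, hNab]
    rcases hab with hA | hB
    · have := hstrict a hA; have := hsemi b; linarith
    · have := hstrict b hB; have := hsemi a; linarith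
  have hrq : r.re < q := by
    have h1 : r.re < N / η := by rw [lt_div_iff₀ hη]; linarith
    linarith
  have hre : (μ.re + 1) * q = r.re := by
    have h := congrArg Complex.re hkey
    simpa [Complex.add_re, Complex.mul_re] using h
  nlinarith [hre, hrq, hqpos]
end

section
/- Under the assumptions of the equilibria assignment theorem with r = p, the covariance-based synaptic matrix W = (α/(p(1−p)n)) Σ_μ (ξᵘ − p𝟙)(ξᵘ − p𝟙)ᵀ + (γ/n)𝟙𝟙ᵀ has every eigenvalue in the set {0, α, γ}. Consequently, if max{φ'(I₀), φ'(I₁)}·max{α, γ} < 1, then max{φ'(I₀), φ'(I₁)}·W ≺ Iₙ. -/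
open Matrix Finset Polynomial

lemma cubic_spectrum {n : ℕ} [NeZero n] (A : Matrix (Fin n) (Fin n) ℝ) (a b c : ℝ)
    (h : (A - a • 1) * (A - b • 1) * (A - c • 1) = 0) :
    ∀ z ∈ spectrum ℝ A, z = a ∨ z = b ∨ z = c := by
  intro z hz
  have hmem := spectrum.subset_polynomial_aeval A ((X - C a) * (X - C b) * (X - C c))
    ⟨z, hz, rfl⟩
  have haev : (Polynomial.aeval A) ((X - C a) * (X - C b) * (X - C c)) = 0 := by
    simp only [_root_.map_mul, _root_.map_sub, aeval_X, aeval_C,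
      Algebra.algebraMap_eq_smul_one]
    exact h
  rw [haev, spectrum.zero_eq] at hmem
  have : (z - a) * (z - b) * (z - c) = 0 := by simpa using hmem
  rcases mul_eq_zero.mp this with h' | h'
  · rcases mul_eq_zero.mp h' with h'' | h''
    · exact Or.inl (by linarith [sub_eq_zero.mp h''])
    · exact Or.inr (Or.inl (sub_eq_zero.mp h''))
  · exact Or.inr (Or.inr (sub_eq_zero.mp h'))


/-- The covariance-based synaptic matrix has spectrum contained in `{0, α, γ}`;
consequently, if `max{φ'(I₀),φ'(I₁)}·max{α,γ} < 1` then
`max{φ'(I₀),φ'(I₁)}·W ≺ Iₙ`. -/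
theorem spectrum_of_W_and_stability
    (n P : ℕ) (hn : 0 < n) (p : ℝ) (hp0 : 0 < p) (hp1 : p < 1)
    (ξ : Fin P → Fin n → ℝ)
    (hbin : ∀ μ i, ξ μ i = 0 ∨ ξ μ i = 1)
    (hsparse : ∀ μ, ∑ i, ξ μ i = p * n)
    (hcorr : ∀ μ ν, μ ≠ ν → ∑ i, ξ μ i * ξ ν i = p ^ 2 * n)
    (φ : ℝ → ℝ) (I₀ I₁ : ℝ) (hI : I₀ < I₁)
    (hdiff₀ : DifferentiableAt ℝ φ I₀) (hdiff₁ : DifferentiableAt ℝ φ I₁)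
    (hd₀ : 0 ≤ deriv φ I₀) (hd₁ : 0 ≤ deriv φ I₁)
    (α γ : ℝ) (hα : 0 < α)
    (W : Matrix (Fin n) (Fin n) ℝ)
    (hW : W = fun i j =>
      α / (p * (1 - p) * n) * ∑ μ, (ξ μ i - p) * (ξ μ j - p) + γ / n) :
    (∀ z ∈ spectrum ℝ W, z = 0 ∨ z = α ∨ z = γ) ∧
      (max (deriv φ I₀) (deriv φ I₁) * max α γ < 1 →
        ((1 : Matrix (Fin n) (Fin n) ℝ) -
          max (deriv φ I₀) (deriv φ I₁) • W).PosDef) := by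
  haveI : NeZero n := ⟨hn.ne'⟩
  have hn' : (n : ℝ) ≠ 0 := by positivity
  set v : Fin P → Fin n → ℝ := fun μ i => ξ μ i - p with hv
  set K : ℝ := p * (1 - p) * n with hKdef
  have hK : K ≠ 0 := by
    have : (0:ℝ) < p * (1 - p) * n := by
      apply mul_pos (mul_pos hp0 (by linarith)) (by positivity)
    exact ne_of_gt this
  set c : ℝ := α / K with hcdef
  set g : ℝ := γ / n with hgdef
  have hcK : c * K = α := div_mul_cancel₀ α hK
  -- basic sums
  have S0 : ∀ μ, ∑ i, v μ i = 0 := by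
    intro μ
    simp only [hv, Finset.sum_sub_distrib, hsparse μ, Finset.sum_const, card_univ,
      Fintype.card_fin, nsmul_eq_mul]
    ring
  have Ssq : ∀ μ, ∑ i, ξ μ i * ξ μ i = p * n := by
    intro μ
    rw [← hsparse μ]
    refine Finset.sum_congr rfl fun i _ => ?_
    rcases hbin μ i with h | h <;> rw [h] <;> ring
  have S1 : ∀ μ ν, ∑ k, v μ k * v ν k = if μ = ν then K else 0 := by
    intro μ ν
    by_cases h : μ = ν
    · subst h
      rw [if_pos rfl]
      simp only [hv]
      have : ∀ k, (ξ μ k - p) * (ξ μ k - p)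
          = ξ μ k * ξ μ k - 2 * p * ξ μ k + p ^ 2 := fun k => by ring
      rw [Finset.sum_congr rfl fun k _ => this k]
      simp only [Finset.sum_add_distrib, Finset.sum_sub_distrib, ← Finset.mul_sum,
        Ssq μ, hsparse μ, Finset.sum_const, card_univ, Fintype.card_fin, nsmul_eq_mul]
      rw [hKdef]; ring
    · simp only [if_neg h, hv]
      have : ∀ k, (ξ μ k - p) * (ξ ν k - p)
          = ξ μ k * ξ ν k - p * ξ μ k - p * ξ ν k + p ^ 2 := fun k => by ring
      rw [Finset.sum_congr rfl fun k _ => this k]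
      simp only [Finset.sum_add_distrib, Finset.sum_sub_distrib, ← Finset.mul_sum,
        hcorr μ ν h, hsparse μ, hsparse ν, Finset.sum_const, card_univ,
        Fintype.card_fin, nsmul_eq_mul]
      ring
  -- the two pieces of W
  set A : Matrix (Fin n) (Fin n) ℝ := Matrix.of fun i j => c * ∑ μ, v μ i * v μ j with hA
  set B : Matrix (Fin n) (Fin n) ℝ := Matrix.of fun i j => g with hB
  have h1 : W = A + B := by
    rw [hW]; ext i j
    simp [hA, hB, hv, hcdef, hgdef, hKdef]
  have h2 : A * A = α • A := by
    ext i j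
    simp only [Matrix.mul_apply, hA, Matrix.of_apply, Matrix.smul_apply, smul_eq_mul]
    have step : ∀ k, (c * ∑ μ, v μ i * v μ k) * (c * ∑ ν, v ν k * v ν j)
        = ∑ μ, ∑ ν, (c * c * (v μ i * v ν j)) * (v μ k * v ν k) := by
      intro k
      rw [Finset.mul_sum, Finset.mul_sum, Finset.sum_mul_sum]
      exact Finset.sum_congr rfl fun μ _ => Finset.sum_congr rfl fun ν _ => by ring
    rw [Finset.sum_congr rfl fun k _ => step k, Finset.sum_comm]
    have inner : ∀ μ, ∑ k, ∑ ν, (c * c * (v μ i * v ν j)) * (v μ k * v ν k)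
        = c * c * K * (v μ i * v μ j) := by
      intro μ
      rw [Finset.sum_comm]
      have : ∀ ν, ∑ k, (c * c * (v μ i * v ν j)) * (v μ k * v ν k)
          = (c * c * (v μ i * v ν j)) * (if μ = ν then K else 0) := by
        intro ν
        rw [← Finset.mul_sum, S1 μ ν]
      rw [Finset.sum_congr rfl fun ν _ => this ν]
      simp only [mul_ite, mul_zero, Finset.sum_ite_eq, Finset.mem_univ, if_true]
      ring
    rw [Finset.sum_congr rfl fun μ _ => inner μ, Finset.mul_sum, Finset.mul_sum]
    refine Finset.sum_congr rfl fun μ _ => ?_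
    have hccK : c * c * K = α * c := by rw [mul_assoc, hcK]; ring
    linear_combination (v μ i * v μ j) * hccK
  have h3 : B * B = γ • B := by
    ext i j
    simp only [Matrix.mul_apply, hB, Matrix.of_apply, Matrix.smul_apply, smul_eq_mul,
      Finset.sum_const, card_univ, Fintype.card_fin, nsmul_eq_mul]
    rw [hgdef]; field_simp
  have h4 : A * B = 0 := by
    ext i j
    simp only [Matrix.mul_apply, hA, hB, Matrix.of_apply, Matrix.zero_apply]
    have : ∀ k, (c * ∑ μ, v μ i * v μ k) * g = ∑ μ, (c * g * v μ i) * v μ k := by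
      intro k
      rw [Finset.mul_sum, Finset.sum_mul]
      exact Finset.sum_congr rfl fun μ _ => by ring
    rw [Finset.sum_congr rfl fun k _ => this k, Finset.sum_comm]
    refine Finset.sum_eq_zero fun μ _ => ?_
    rw [← Finset.mul_sum, S0 μ, mul_zero]
  have h5 : B * A = 0 := by
    ext i j
    simp only [Matrix.mul_apply, hA, hB, Matrix.of_apply, Matrix.zero_apply]
    have : ∀ k, g * (c * ∑ ν, v ν k * v ν j) = ∑ ν, (g * c * v ν j) * v ν k := by
      intro k
      rw [Finset.mul_sum, Finset.mul_sum]
      exact Finset.sum_congr rfl fun ν _ => by ring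
    rw [Finset.sum_congr rfl fun k _ => this k, Finset.sum_comm]
    refine Finset.sum_eq_zero fun ν _ => ?_
    rw [← Finset.mul_sum, S0 ν, mul_zero]
  -- the cubic matrix identity
  have e1 : W * (W - α • 1) = (γ - α) • B := by
    rw [h1, mul_sub, add_mul, mul_add, mul_add, h2, h3, h4, h5, mul_smul_comm, mul_one]
    module
  have e2 : B * (W - γ • 1) = 0 := by
    rw [h1, mul_sub, mul_add, h5, h3, mul_smul_comm, mul_one]
    module
  have hcube : W * (W - α • 1) * (W - γ • 1) = 0 := by
    rw [e1, smul_mul_assoc, e2, smul_zero]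
  have hcube0 : (W - (0:ℝ) • 1) * (W - α • 1) * (W - γ • 1) = 0 := by
    simpa using hcube
  have part1 := cubic_spectrum W 0 α γ hcube0
  refine ⟨part1, ?_⟩
  intro hlt
  set m : ℝ := max (deriv φ I₀) (deriv φ I₁) with hm
  have hm0 : 0 ≤ m := le_trans hd₀ (le_max_left _ _)
  have hmα : m * α < 1 :=
    lt_of_le_of_lt (mul_le_mul_of_nonneg_left (le_max_left α γ) hm0) hlt
  have hmγ : m * γ < 1 :=
    lt_of_le_of_lt (mul_le_mul_of_nonneg_left (le_max_right α γ) hm0) hlt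
  -- W is hermitian
  have hWsym : W.IsHermitian := by
    rw [Matrix.IsHermitian, hW]
    ext i j
    erw [Matrix.conjTranspose_apply]
    simp only [Matrix.conjTranspose_apply, Matrix.of_apply, star_trivial]
    congr 1
    congr 1
    exact Finset.sum_congr rfl fun μ _ => mul_comm _ _
  set ε : ℝ := min 1 (min (1 - m * α) (1 - m * γ)) with hε
  have hε0 : 0 < ε := by
    apply lt_min one_pos
    apply lt_min <;> linarith
  have hε1 : ε ≤ 1 := min_le_left _ _
  have hεα : ε ≤ 1 - m * α := le_trans (min_le_right _ _) (min_le_left _ _)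
  have hεγ : ε ≤ 1 - m * γ := le_trans (min_le_right _ _) (min_le_right _ _)
  set M : Matrix (Fin n) (Fin n) ℝ := (1 : Matrix (Fin n) (Fin n) ℝ) - m • W with hM
  set A' : Matrix (Fin n) (Fin n) ℝ := M - ε • 1 with hA'
  have f1 : A' - (1 - ε) • 1 = (-m) • W := by rw [hA', hM]; module
  have f2 : A' - (1 - m * α - ε) • 1 = (-m) • (W - α • 1) := by rw [hA', hM]; module
  have f3 : A' - (1 - m * γ - ε) • 1 = (-m) • (W - γ • 1) := by rw [hA', hM]; module
  have hcube' : (A' - (1 - ε) • 1) * (A' - (1 - m * α - ε) • 1) *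
      (A' - (1 - m * γ - ε) • 1) = 0 := by
    rw [f1, f2, f3]
    simp only [smul_mul_assoc, mul_smul_comm, hcube, smul_zero]
  have hsmulH : ∀ (r : ℝ) (C : Matrix (Fin n) (Fin n) ℝ),
      C.IsHermitian → (r • C).IsHermitian := by
    intro r C hC
    apply Matrix.IsHermitian.ext
    intro i j
    simp only [Matrix.smul_apply, star_trivial, smul_eq_mul]
    rw [← hC.apply i j]
    simp
  have hA'sym : A'.IsHermitian := by
    rw [hA', hM]
    exact (Matrix.isHermitian_one.sub (hsmulH m W hWsym)).sub
      (hsmulH ε 1 Matrix.isHermitian_one)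
  have hA'psd : A'.PosSemidef := by
    apply (Matrix.IsHermitian.posSemidef_iff_eigenvalues_nonneg hA'sym).mpr
    intro i
    rw [Pi.zero_apply]
    have hz := cubic_spectrum A' (1 - ε) (1 - m * α - ε) (1 - m * γ - ε) hcube'
      (Matrix.IsHermitian.eigenvalues hA'sym i) (Matrix.IsHermitian.eigenvalues_mem_spectrum_real hA'sym i)
    rcases hz with h | h | h <;> rw [h] <;> linarith
  show M.PosDef
  have hfinal : M = ε • (1 : Matrix (Fin n) (Fin n) ℝ) + A' := by
    rw [hA']; module
  rw [hfinal]
  have hdiag : ε • (1 : Matrix (Fin n) (Fin n) ℝ) = Matrix.diagonal (fun _ => ε) := by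
    ext i j
    by_cases h : i = j <;>
      simp [Matrix.smul_apply, Matrix.one_apply, Matrix.diagonal_apply, h]
  rw [hdiag]
  exact (Matrix.PosDef.diagonal fun _ => hε0).add_posSemidef hA'psd
end

section
/- Let W ∈ ℝⁿˣⁿ be symmetric, φ: ℝ → ℝ weakly increasing with right inverse φ⁻¹, and define E(x) = −½ xᵀWx + Σᵢ ∫₀^{xᵢ} φ⁻¹(z) dz on a set where φ⁻¹ is integrable. Then along any solution x(t) of ẋ = −x + Φ(Wx), the derivative of E satisfies dE/dt = Σᵢ (−(Wx)ᵢ + φ⁻¹(xᵢ))(−xᵢ + φ((Wx)ᵢ)) ≤ 0, with equality if and only if x is an equilibrium point (i.e., φ((Wx)ᵢ) = xᵢ for all i). -/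
open Matrix Finset

/-- Energy dissipation along trajectories of the firing rate model: along any
solution of `ẋ = −x + Φ(Wx)`, the derivative of
`E(x) = −½ xᵀWx + Σᵢ ∫₀^{xᵢ} φ⁻¹` equals
`Σᵢ (−(Wx)ᵢ + φ⁻¹(xᵢ))(−xᵢ + φ((Wx)ᵢ)) ≤ 0`, with equality iff `x` is an
equilibrium. -/
theorem energy_dissipation
    (n : ℕ) (W : Matrix (Fin n) (Fin n) ℝ) (hWsymm : W.IsSymm)
    (φ ψ : ℝ → ℝ) (hmono : Monotone φ) (hψcont : Continuous ψ)
    (hright : ∀ y ∈ Set.range φ, φ (ψ y) = y)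
    (E : (Fin n → ℝ) → ℝ)
    (hE : E = fun x => -(1 / 2) * ∑ i, ∑ j, x i * W i j * x j +
      ∑ i, ∫ z in (0 : ℝ)..(x i), ψ z)
    (x : ℝ → Fin n → ℝ) (t : ℝ)
    (hsol : ∀ i, HasDerivAt (fun s => x s i)
      (-(x t i) + φ ((W *ᵥ x t) i)) t)
    (hrange : ∀ i, x t i ∈ Set.range φ) :
    HasDerivAt (fun s => E (x s))
        (∑ i, (-(W *ᵥ x t) i + ψ (x t i)) * (-(x t i) + φ ((W *ᵥ x t) i))) t ∧
      (∑ i, (-(W *ᵥ x t) i + ψ (x t i)) * (-(x t i) + φ ((W *ᵥ x t) i))) ≤ 0 ∧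
      ((∑ i, (-(W *ᵥ x t) i + ψ (x t i)) * (-(x t i) + φ ((W *ᵥ x t) i))) = 0 ↔
        ∀ i, φ ((W *ᵥ x t) i) = x t i) := by
  classical
  set a : Fin n → ℝ := fun i => (W *ᵥ x t) i with ha
  set d : Fin n → ℝ := fun i => -(x t i) + φ ((W *ᵥ x t) i) with hd
  have hterm : ∀ i, (-(W *ᵥ x t) i + ψ (x t i)) * (-(x t i) + φ ((W *ᵥ x t) i)) ≤ 0 := by
    intro i
    have hb : φ (ψ (x t i)) = x t i := hright _ (hrange i)
    rcases le_total ((W *ᵥ x t) i) (ψ (x t i)) with h | h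
    · have h2 := hmono h
      nlinarith
    · have h2 := hmono h
      nlinarith
  refine ⟨?_, Finset.sum_nonpos fun i _ => hterm i, ?_⟩
  · have hquad : HasDerivAt (fun s => -(1/2 : ℝ) * ∑ i, ∑ j, x s i * W i j * x s j)
        (-(1/2 : ℝ) * ∑ i, ∑ j, (d i * W i j * x t j + x t i * W i j * d j)) t := by
      apply HasDerivAt.const_mul
      apply HasDerivAt.fun_sum; intro i _
      apply HasDerivAt.fun_sum; intro j _
      exact ((hsol i).mul_const (W i j)).mul (hsol j)
    have hint : ∀ i, HasDerivAt (fun s => ∫ z in (0:ℝ)..(x s i), ψ z) (ψ (x t i) * d i) t := by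
      intro i
      have hF : HasDerivAt (fun u => ∫ z in (0:ℝ)..u, ψ z) (ψ (x t i)) (x t i) :=
        (hψcont.integral_hasStrictDerivAt 0 (x t i)).hasDerivAt
      exact hF.comp t (hsol i)
    have hsum : HasDerivAt (fun s => ∑ i, ∫ z in (0:ℝ)..(x s i), ψ z)
        (∑ i, ψ (x t i) * d i) t := HasDerivAt.fun_sum fun i _ => hint i
    have htot := hquad.add hsum
    have hEeq : (fun s => E (x s)) = fun s =>
        -(1/2 : ℝ) * ∑ i, ∑ j, x s i * W i j * x s j +
          ∑ i, ∫ z in (0:ℝ)..(x s i), ψ z := by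
      funext s; rw [hE]
    rw [hEeq]
    convert htot using 1
    case e'_4 => rfl
    case e'_5 => rfl
    case e'_8 => rfl
    have h1 : ∑ i, ∑ j, d i * W i j * x t j = ∑ i, a i * d i := by
      refine Finset.sum_congr rfl fun i _ => ?_
      rw [ha]
      simp only [Matrix.mulVec, dotProduct]
      rw [Finset.sum_mul]
      exact Finset.sum_congr rfl fun j _ => by ring
    have h2 : ∑ i, ∑ j, x t i * W i j * d j = ∑ i, a i * d i := by
      rw [Finset.sum_comm]
      refine Finset.sum_congr rfl fun j _ => ?_
      rw [ha]
      simp only [Matrix.mulVec, dotProduct]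
      rw [Finset.sum_mul]
      refine Finset.sum_congr rfl fun i _ => ?_
      rw [← hWsymm.apply i j]
      ring
    have hsplit : ∑ i, ∑ j, (d i * W i j * x t j + x t i * W i j * d j)
        = (∑ i, ∑ j, d i * W i j * x t j) + ∑ i, ∑ j, x t i * W i j * d j := by
      rw [← Finset.sum_add_distrib]
      exact Finset.sum_congr rfl fun i _ => Finset.sum_add_distrib
    rw [hsplit, h1, h2]
    rw [show (∑ i, (-(W *ᵥ x t) i + ψ (x t i)) * (-(x t i) + φ ((W *ᵥ x t) i)))
        = ∑ i, (-(a i * d i) + ψ (x t i) * d i) from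
      Finset.sum_congr rfl fun i _ => by rw [ha, hd]; ring]
    rw [Finset.sum_add_distrib, Finset.sum_neg_distrib]
    ring
  · constructor
    · intro hzero i
      have := (Finset.sum_eq_zero_iff_of_nonpos fun i _ => hterm i).mp hzero i (by simp)
      rcases mul_eq_zero.mp this with h | h
      · have hb : ψ (x t i) = (W *ᵥ x t) i := by linarith
        rw [← hb, hright _ (hrange i)]
      · linarith
    · intro heq
      refine Finset.sum_eq_zero fun i _ => ?_
      rw [heq i]
      ring
end
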